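/- If z is an extreme point of S_α^m different from every standard basis vector, then z does not have two coordinates with nonzero imaginary parts of the same sign. -/

import Mathlib

/-! The sector `|Im c| ≤ t Re c` (`t = tan α`) is cut out by the two constraints
`±Im c ≤ t Re c`. If `Im c` has sign `σ`, moving `c` along the edge direction `u = 1 + iσt`
keeps the slack of `σ Im c ≤ t Re c` unchanged, while the other constraint has slack
`2σ Im c > 0`; so `c ± δu` stays in the sector for small `δ > 0`. If `z i` and `z j` have
imaginary parts of the same sign `σ`, transferring `δu` from `z j` to `z i`, or back, gives two
points of `S_α^m` whose midpoint is `z`, so `z` is not extreme. -/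

noncomputable def payoff {m n : ℕ} (A : Matrix (Fin m) (Fin n) ℂ)
    (z : Fin m → ℂ) (w : Fin n → ℂ) : ℝ :=
  (∑ i, ∑ j, (starRingEnd ℂ) (z i) * A i j * w j).re

def Sarg (m : ℕ) (α : ℝ) : Set (Fin m → ℂ) :=
  {z | (∀ i, 0 ≤ (z i).re ∧ |(z i).im| ≤ Real.tan α * (z i).re) ∧ ∑ i, z i = 1}

theorem eq_zero_of_mem_extremePoints_of_add_mem_of_sub_mem {𝕜 E : Type*} [Field 𝕜]
    [LinearOrder 𝕜] [IsStrictOrderedRing 𝕜] [AddCommGroup E] [Module 𝕜 E] {A : Set E} {x d : E}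
    (hx : x ∈ A.extremePoints 𝕜) (hadd : x + d ∈ A) (hsub : x - d ∈ A) : d = 0 := by
  have hmid : x ∈ openSegment 𝕜 (x + d) (x - d) :=
    ⟨1 / 2, 1 / 2, by norm_num, by norm_num, by norm_num, by module⟩
  simpa using hx.2 hadd hsub hmid

def sector (t : ℝ) : Set ℂ :=
  {c | 0 ≤ c.re ∧ |c.im| ≤ t * c.re}

theorem mem_Sarg_iff {m : ℕ} {α : ℝ} {z : Fin m → ℂ} :
    z ∈ Sarg m α ↔ (∀ i, z i ∈ sector (Real.tan α)) ∧ ∑ i, z i = 1 :=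
  Iff.rfl

/-- For `σ = ±1`, the direction of the edge of `sector t` in the half plane `0 ≤ σ * im`. -/
def sectorEdge (t σ : ℝ) : ℂ :=
  ⟨1, σ * t⟩

theorem add_smul_sectorEdge_mem_sector {t σ δ : ℝ} {c : ℂ} (ht : 0 < t) (hσ : |σ| = 1)
    (hc : c ∈ sector t) (hδ : |δ| * t ≤ σ * c.im) : c + δ • sectorEdge t σ ∈ sector t := by
  obtain ⟨hre, him⟩ := hc
  have hσim : σ * c.im ≤ |c.im| := by
    simpa [abs_mul, hσ] using le_abs_self (σ * c.im)
  have hσσ : σ * σ = 1 := by rw [← abs_mul_abs_self, hσ, one_mul]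
  have hδ_le_re : |δ| ≤ c.re := le_of_mul_le_mul_right (by linarith) ht
  have hnonneg : 0 ≤ σ * c.im + δ * t := by nlinarith [neg_abs_le δ]
  have habs_im : |c.im + δ * (σ * t)| = σ * c.im + δ * t := by
    rw [← abs_of_nonneg hnonneg, ← one_mul |c.im + _|, ← hσ, ← abs_mul]
    congr 1
    linear_combination δ * t * hσσ
  have hre_add : (c + δ • sectorEdge t σ).re = c.re + δ := by simp [sectorEdge]
  have him_add : (c + δ • sectorEdge t σ).im = c.im + δ * (σ * t) := by simp [sectorEdge]
  refine ⟨?_, ?_⟩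
  · rw [hre_add]
    linarith [neg_abs_le δ]
  · rw [hre_add, him_add, habs_im]
    nlinarith

theorem add_smul_mem_sector_and_sub_smul_mem_sector {t σ δ : ℝ} {c : ℂ} (ht : 0 < t)
    (hσ : |σ| = 1) (hc : c ∈ sector t) (hδ : |δ| * t ≤ σ * c.im) :
    c + δ • sectorEdge t σ ∈ sector t ∧ c - δ • sectorEdge t σ ∈ sector t := by
  refine ⟨add_smul_sectorEdge_mem_sector ht hσ hc hδ, ?_⟩
  rw [sub_eq_add_neg, ← neg_smul]
  exact add_smul_sectorEdge_mem_sector ht hσ hc (by rwa [abs_neg])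

theorem add_single_sub_single_mem_Sarg {m : ℕ} {α : ℝ} {z : Fin m → ℂ} {i j : Fin m} {e : ℂ}
    (hz : z ∈ Sarg m α) (hij : i ≠ j) (hi : z i + e ∈ sector (Real.tan α))
    (hj : z j - e ∈ sector (Real.tan α)) : z + (Pi.single i e - Pi.single j e) ∈ Sarg m α := by
  rw [mem_Sarg_iff] at hz ⊢
  refine ⟨fun k => ?_, ?_⟩
  · rcases eq_or_ne k i with rfl | hki
    · simpa [hij] using hi
    rcases eq_or_ne k j with rfl | hkj
    · simpa [hki, sub_eq_add_neg] using hj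
    · simpa [hki, hkj] using hz.1 k
  · simp [Finset.sum_add_distrib, Finset.sum_sub_distrib, hz.2]

theorem extreme_point_no_same_sign_general (m : ℕ) (α₀ : ℝ)
    (hα : α₀ ∈ Set.Ioo 0 (Real.pi / 2))
    (z : Fin m → ℂ) (hz : z ∈ Set.extremePoints ℝ (Sarg m α₀)) :
    ¬ ∃ i j : Fin m, i ≠ j ∧
      ((0 < (z i).im ∧ 0 < (z j).im) ∨ ((z i).im < 0 ∧ (z j).im < 0)) := by
  rintro ⟨i, j, hij, hsign⟩
  set t := Real.tan α₀
  have ht : 0 < t := Real.tan_pos_of_pos_of_lt_pi_div_two hα.1 hα.2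
  obtain ⟨σ, hσ, hi, hj⟩ : ∃ σ : ℝ, |σ| = 1 ∧ 0 < σ * (z i).im ∧ 0 < σ * (z j).im := by
    rcases hsign with ⟨hi, hj⟩ | ⟨hi, hj⟩
    · exact ⟨1, abs_one, by linarith, by linarith⟩
    · exact ⟨-1, by simp, by linarith, by linarith⟩
  obtain ⟨δ, hδ, hδi, hδj⟩ : ∃ δ : ℝ, 0 < δ ∧ |δ| * t ≤ σ * (z i).im ∧ |δ| * t ≤ σ * (z j).im := by
    refine ⟨min (σ * (z i).im) (σ * (z j).im) / t, div_pos (lt_min hi hj) ht, ?_⟩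
    rw [abs_of_pos (div_pos (lt_min hi hj) ht), div_mul_cancel₀ _ ht.ne']
    exact ⟨min_le_left _ _, min_le_right _ _⟩
  have hsector := (mem_Sarg_iff.1 hz.1).1
  obtain ⟨hi_add, hi_sub⟩ := add_smul_mem_sector_and_sub_smul_mem_sector ht hσ (hsector i) hδi
  obtain ⟨hj_add, hj_sub⟩ := add_smul_mem_sector_and_sub_smul_mem_sector ht hσ (hsector j) hδj
  have hd := eq_zero_of_mem_extremePoints_of_add_mem_of_sub_mem hz
    (add_single_sub_single_mem_Sarg hz.1 hij hi_add hj_sub)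
    (by
      rw [sub_eq_add_neg, neg_sub]
      exact add_single_sub_single_mem_Sarg hz.1 hij.symm hj_add hi_sub)
  have hu : sectorEdge t σ ≠ 0 := fun h => by simpa [sectorEdge] using congrArg Complex.re h
  simpa [hij, hδ.ne', hu] using congrFun hd i

/-- A nontrivial extreme point of S_α^m has no two coordinates with nonzero imaginary
parts of the same sign. -/
theorem extreme_point_no_same_sign (m : ℕ) (α₀ : ℝ)
    (hα : α₀ ∈ Set.Ioo 0 (Real.pi / 2))
    (z : Fin m → ℂ) (hz : z ∈ Set.extremePoints ℝ (Sarg m α₀))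
    (hne : ∀ k : Fin m, z ≠ fun j => if j = k then (1 : ℂ) else 0) :
    ¬ ∃ i j : Fin m, i ≠ j ∧
      ((0 < (z i).im ∧ 0 < (z j).im) ∨ ((z i).im < 0 ∧ (z j).im < 0)) :=
  extreme_point_no_same_sign_general m α₀ hα z hz
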